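/- Let X be an infinite compact Hausdorff Abelian group and H a dense subgroup of X. Then H is g-closed in X if and only if there exists a TS-set S of sequences in the abstract character group G = X^ such that (G, τ_S) is MAP and H = { x ∈ X : u_n(x) → 1 in 𝕋 for every sequence (u_n) ∈ S } (equivalently, under the canonical identification of X with G_d^, H is algebraically the dual group of G endowed with the MAP s-topology τ_S). -/

import Mathlib

open Filter Topology

noncomputable section

/-- The circle group `𝕋 = ℝ/ℤ`. -/
abbrev 𝕋 : Type := AddCircle (1 : ℝ)

/-- The sequence `u` converges to `0` in the topology `τ`. -/
def TendsToZero {G : Type*} [AddCommGroup G] (τ : TopologicalSpace G) (u : ℕ → G) : Prop :=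
  Filter.Tendsto u Filter.atTop (@nhds G τ 0)

/-- `τ` is a Hausdorff group topology on `G` in which every sequence of `S` converges to `0`. -/
def IsTopFor {G : Type*} [AddCommGroup G] (S : Set (ℕ → G)) (τ : TopologicalSpace G) : Prop :=
  @IsTopologicalAddGroup G τ _ ∧ @T2Space G τ ∧ ∀ u ∈ S, TendsToZero τ u

/-- `S` is a `TS`-set of sequences in `G`. -/
def IsTSSet {G : Type*} [AddCommGroup G] (S : Set (ℕ → G)) : Prop :=
  ∃ τ : TopologicalSpace G, IsTopFor S τ

/-- `τ` is the finest Hausdorff group topology on `G` in which every sequence of `S`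
converges to `0` (recall that in Mathlib's order on topologies, `≤` means "finer"). -/
def IsFinestFor {G : Type*} [AddCommGroup G] (S : Set (ℕ → G)) (τ : TopologicalSpace G) : Prop :=
  IsTopFor S τ ∧ ∀ τ' : TopologicalSpace G, IsTopFor S τ' → τ ≤ τ'

/-- The group topology `τ` on `G` is totally bounded (precompact): every neighborhood `U` of `0`
has finitely many translates covering `G`. -/
def IsPrecompactTop {G : Type*} [AddCommGroup G] (τ : TopologicalSpace G) : Prop :=
  ∀ U ∈ @nhds G τ 0, ∃ F : Finset G, ∀ g : G, ∃ f ∈ F, g - f ∈ U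

/-- `τ` is a totally bounded Hausdorff group topology on `G` in which every sequence of `S`
converges to `0`. -/
def IsPTopFor {G : Type*} [AddCommGroup G] (S : Set (ℕ → G)) (τ : TopologicalSpace G) : Prop :=
  IsTopFor S τ ∧ IsPrecompactTop τ

/-- `S` is a `TBS`-set of sequences in `G`. -/
def IsTBSSet {G : Type*} [AddCommGroup G] (S : Set (ℕ → G)) : Prop :=
  ∃ τ : TopologicalSpace G, IsPTopFor S τ

/-- `τ` is the finest totally bounded Hausdorff group topology on `G` in which every sequence
of `S` converges to `0`. -/
def IsFinestPFor {G : Type*} [AddCommGroup G] (S : Set (ℕ → G)) (τ : TopologicalSpace G) : Prop :=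
  IsPTopFor S τ ∧ ∀ τ' : TopologicalSpace G, IsPTopFor S τ' → τ ≤ τ'

/-- `s_S(G_d^∧)`: the characters `χ` of the discrete group `G` with `χ(u_n) → 0` for all
`u ∈ S`. -/
def sS {G : Type*} [AddCommGroup G] (S : Set (ℕ → G)) : Set (G →+ 𝕋) :=
  {χ | ∀ u ∈ S, Filter.Tendsto (fun n => χ (u n)) Filter.atTop (nhds (0 : 𝕋))}

/-- `T_H`: the coarsest (initial) topology on `G` making every character of `H` continuous. -/
def TH {G : Type*} [AddCommGroup G] (H : Set (G →+ 𝕋)) : TopologicalSpace G :=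
  ⨅ χ ∈ H, TopologicalSpace.induced (χ : G → 𝕋) inferInstance

/-- `(G, τ)` is maximally almost periodic: continuous characters separate points. -/
def IsMAP {G : Type*} [AddCommGroup G] (τ : TopologicalSpace G) : Prop :=
  ∀ g : G, g ≠ 0 → ∃ χ : G →+ 𝕋, @Continuous G 𝕋 τ _ χ ∧ χ g ≠ 0

/-- The dual group of `(G, τ)`: the subgroup of the character group of `G_d` consisting of
`τ`-continuous characters. -/
def dual {G : Type*} [AddCommGroup G] (τ : TopologicalSpace G) : AddSubgroup (G →+ 𝕋) where
  carrier := {χ : G →+ 𝕋 | @Continuous G 𝕋 τ _ χ}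
  zero_mem' := by
    letI := τ
    show Continuous fun _ : G => (0 : 𝕋)
    exact continuous_const
  add_mem' := by
    intro a b ha hb
    letI := τ
    show Continuous fun g : G => a g + b g
    exact Continuous.add ha hb
  neg_mem' := by
    intro a ha
    letI := τ
    show Continuous fun g : G => -(a g)
    exact Continuous.neg ha

/-- The compact-open topology on the dual group of `(G, τ)`. -/
def coTop {G : Type*} [AddCommGroup G] (τ : TopologicalSpace G) :
    TopologicalSpace ↥(dual τ) :=
  TopologicalSpace.generateFrom
    {T | ∃ (K : Set G) (U : Set 𝕋), @IsCompact G τ K ∧ IsOpen U ∧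
          T = {χ : ↥(dual τ) | ∀ g ∈ K, (χ : G →+ 𝕋) g ∈ U}}

/-- Evaluation at `g ∈ G`, as a character of the dual group of `(G, τ)`; this is the value of the
canonical map `G → bG` at `g`. -/
def evalHom {G : Type*} [AddCommGroup G] (τ : TopologicalSpace G) (g : G) :
    ↥(dual τ) →+ 𝕋 where
  toFun χ := (χ : G →+ 𝕋) g
  map_zero' := rfl
  map_add' _ _ := rfl

/-- The natural (compact-open = pointwise) topology on the character group `A_d^∧` of a
discrete abelian group `A`. -/
def Xtop (A : Type*) [AddCommGroup A] : TopologicalSpace (A →+ 𝕋) :=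
  TopologicalSpace.induced (fun χ : A →+ 𝕋 => (χ : A → 𝕋)) Pi.topologicalSpace

/-- For a sequence `u` of characters of `X`, `su u = s_u(X) = {x | u_n(x) → 0}`. -/
def su {X : Type*} [AddCommGroup X] (u : ℕ → (X →+ 𝕋)) : Set X :=
  {x | Filter.Tendsto (fun n => u n x) Filter.atTop (nhds (0 : 𝕋))}

/-- The `g`-closure of a subset `H` of the abelian topological group `(X, τ)`: the intersection
of all `s_u(X)` over sequences `u` of continuous characters of `(X, τ)` with `H ⊆ s_u(X)`. -/
def gClosure {X : Type*} [AddCommGroup X] (τ : TopologicalSpace X) (H : Set X) : Set X :=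
  ⋂ u ∈ {u : ℕ → (X →+ 𝕋) | (∀ n, @Continuous X 𝕋 τ _ (u n)) ∧ H ⊆ su u}, su u

/-- `H` is a `g`-closed subset of `(X, τ)`. -/
def IsGClosed {X : Type*} [AddCommGroup X] (τ : TopologicalSpace X) (H : Set X) : Prop :=
  gClosure τ H = H

/-- The weight of a topology: the least cardinality of a topological basis. -/
def topWeight {X : Type*} (τ : TopologicalSpace X) : Cardinal :=
  ⨅ B ∈ {B : Set (Set X) | @TopologicalSpace.IsTopologicalBasis X τ B}, Cardinal.mk B

/-- The group uniformity of the group topology `τ` on `G`. -/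
def uniformOf {G : Type*} [AddCommGroup G] (τ : TopologicalSpace G)
    (h : @IsTopologicalAddGroup G τ _) : UniformSpace G :=
  letI := τ; haveI := h; IsTopologicalAddGroup.rightUniformSpace (G := G)

end

/-- Corollary 1.9: A dense subgroup `H` of an infinite compact Hausdorff
Abelian group `X` is `g`-closed iff there is a `TS`-set `S` of sequences in the character
group `G = X^∧` such that `(G, τ_S)` is MAP and
`H = {x ∈ X | u_n(x) → 0 for every (u_n) ∈ S}`. -/
theorem statement_4 {X : Type*} [AddCommGroup X] [tX : TopologicalSpace X]
    [IsTopologicalAddGroup X] [CompactSpace X] [T2Space X] [Infinite X]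
    (H : AddSubgroup X) (hH : Dense (H : Set X)) :
    IsGClosed tX (H : Set X) ↔
      ∃ (S : Set (ℕ → ↥(dual tX))) (τS : TopologicalSpace ↥(dual tX)),
        IsFinestFor S τS ∧ IsMAP τS ∧
        (H : Set X) = {x : X | ∀ u ∈ S,
          Filter.Tendsto (fun n => ((u n : X →+ 𝕋)) x) Filter.atTop (nhds (0 : 𝕋))} := by
  constructor
  · intro hg
    classical
    -- The restriction-to-`H` homomorphism on the dual group.
    let e : ↥(dual tX) →+ (↥H → 𝕋) :=
      { toFun := fun χ => fun h => (χ : X →+ 𝕋) h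
        map_zero' := rfl
        map_add' := fun _ _ => rfl }
    have hinj : Function.Injective ⇑e := by
      intro a b hab
      apply Subtype.ext
      have hfun : ((a : X →+ 𝕋) : X → 𝕋) = ((b : X →+ 𝕋) : X → 𝕋) :=
        Continuous.ext_on hH a.2 b.2 (fun x hx => congrFun hab ⟨x, hx⟩)
      exact AddMonoidHom.ext fun x => congrFun hfun x
    -- The pointwise-on-`H` topology on the dual group.
    let τ₀ : TopologicalSpace ↥(dual tX) := TopologicalSpace.induced ⇑e Pi.topologicalSpace
    have hgrp0 : @IsTopologicalAddGroup _ τ₀ _ := topologicalAddGroup_induced e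
    have ht2 : @T2Space _ τ₀ :=
      @T2Space.of_injective_continuous _ _ τ₀ _ _ _ hinj (continuous_induced_dom)
    -- The set `S` of sequences converging to `0` pointwise on `H`.
    set S : Set (ℕ → ↥(dual tX)) :=
      {u | ∀ x ∈ H, Filter.Tendsto (fun n => ((u n : X →+ 𝕋)) x) Filter.atTop (nhds (0 : 𝕋))}
      with hSdef
    have hconv0 : ∀ u ∈ S, TendsToZero τ₀ u := by
      intro u hu
      have hpi : Filter.Tendsto (⇑e ∘ u) Filter.atTop (nhds (e 0)) := by
        rw [map_zero, tendsto_pi_nhds]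
        intro h
        exact hu h h.2
      show Filter.Tendsto u Filter.atTop (@nhds _ τ₀ 0)
      rw [show (@nhds _ τ₀ 0) = Filter.comap ⇑e (nhds (e 0)) from nhds_induced ⇑e 0]
      exact Filter.tendsto_comap_iff.mpr hpi
    have htop0 : IsTopFor S τ₀ := ⟨hgrp0, ht2, hconv0⟩
    -- `τS` is the infimum of all Hausdorff group topologies for `S`.
    set s' : Set (AddGroupTopology ↥(dual tX)) := {t | IsTopFor S t.toTopologicalSpace} with hs'
    set τS : TopologicalSpace ↥(dual tX) :=
      sInf (AddGroupTopology.toTopologicalSpace '' s') with hτS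
    have hle : ∀ τ' : TopologicalSpace ↥(dual tX), IsTopFor S τ' → τS ≤ τ' := by
      intro τ' h'
      have hmem : (⟨τ', h'.1⟩ : AddGroupTopology ↥(dual tX)) ∈ s' := h'
      exact sInf_le ⟨_, hmem, rfl⟩
    have hle0 : τS ≤ τ₀ := hle τ₀ htop0
    have hgrpS : @IsTopologicalAddGroup _ τS _ := by
      have := (sInf s' : AddGroupTopology ↥(dual tX)).toIsTopologicalAddGroup
      rwa [AddGroupTopology.toTopologicalSpace_sInf] at this
    have ht2S : @T2Space _ τS :=
      @T2Space.of_injective_continuous _ _ τS τ₀ ht2 id Function.injective_id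
        (continuous_id_of_le hle0)
    have hconvS : ∀ u ∈ S, TendsToZero τS u := by
      intro u hu
      show Filter.Tendsto u Filter.atTop (@nhds _ τS 0)
      rw [hτS, nhds_sInf]
      refine Filter.tendsto_iInf.2 fun t => Filter.tendsto_iInf.2 fun ht => ?_
      obtain ⟨g, hg', rfl⟩ := ht
      exact hg'.2.2 u hu
    have hmap : IsMAP τS := by
      intro g hgne0
      have hgne : (g : X →+ 𝕋) ≠ 0 := fun h => hgne0 (Subtype.ext h)
      have hex : ∃ x ∈ H, (g : X →+ 𝕋) x ≠ 0 := by
        by_contra hcon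
        push_neg at hcon
        apply hgne
        have hfun : ((g : X →+ 𝕋) : X → 𝕋) = ((0 : X →+ 𝕋) : X → 𝕋) :=
          Continuous.ext_on hH g.2 continuous_const (fun x hx => hcon x hx)
        exact AddMonoidHom.ext fun x => congrFun hfun x
      obtain ⟨x, hx, hgx⟩ := hex
      refine ⟨evalHom tX x, ?_, hgx⟩
      have hc0 : @Continuous _ _ τ₀ _ ⇑(evalHom tX x) := by
        have h1 : @Continuous _ _ τ₀ _ ⇑e := continuous_induced_dom
        have h2 := @Continuous.comp (↥(dual tX)) (↥H → 𝕋) 𝕋 τ₀ _ _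
          ⇑e (fun p : ↥H → 𝕋 => p ⟨x, hx⟩) (continuous_apply (⟨x, hx⟩ : ↥H)) h1
        exact h2
      exact continuous_le_dom hle0 hc0
    refine ⟨S, τS, ⟨⟨hgrpS, ht2S, hconvS⟩, hle⟩, hmap, ?_⟩
    ext x
    simp only [Set.mem_setOf_eq, SetLike.mem_coe]
    constructor
    · intro hx u hu
      exact hu x hx
    · intro hx
      have hxg : x ∈ gClosure tX (H : Set X) := by
        refine Set.mem_iInter₂.2 fun v hv => ?_
        have hu : (fun n => (⟨v n, hv.1 n⟩ : ↥(dual tX))) ∈ S := fun y hy => hv.2 hy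
        exact hx _ hu
      rw [hg] at hxg
      exact hxg
  · rintro ⟨S, τS, -, -, heq⟩
    unfold IsGClosed
    apply subset_antisymm
    · intro x hx
      rw [heq]
      intro u hu
      have hv : (fun n => ((u n : X →+ 𝕋))) ∈
          {v : ℕ → X →+ 𝕋 | (∀ n, @Continuous X 𝕋 tX _ (v n)) ∧ (H : Set X) ⊆ su v} := by
        refine ⟨fun n => (u n).2, fun y hy => ?_⟩
        rw [heq] at hy
        exact hy u hu
      exact Set.mem_iInter₂.1 hx _ hv
    · intro x hx
      exact Set.mem_iInter₂.2 fun v hv => hv.2 hx
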